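/- Let (S,R) be an argumentation network with |S| = n, V₀ : S → [0,1] an initial assignment, and (V_i) the Gabbay-Rodrigues iteration sequence from V₀. Then: (1) if the sequence is not stable at iteration k, then there exists X ∈ S with V_k(X) ∈ {0,1} and 0 < V_{k+1}(X) < 1; and (2) the sequence is stable at some iteration k ≤ n. -/
import Mathlib


open Filter Topology

variable {S : Type*}

/-- Maximum of `V` over the attackers of `X` (i.e. `{Y | R Y X}`),
with the convention that the maximum over the empty set is `0`. -/
noncomputable def attMax [Fintype S] (R : S → S → Prop) [DecidableRel R] (V : S → ℝ) (X : S) : ℝ :=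
  (Finset.univ.filter (fun Y => R Y X)).fold max 0 V

/-- One step of the Gabbay-Rodrigues iteration. -/
noncomputable def grStep [Fintype S] (R : S → S → Prop) [DecidableRel R] (V : S → ℝ) (X : S) : ℝ :=
  (1 - V X) * min (1/2) (1 - attMax R V X) + V X * max (1/2) (1 - attMax R V X)

/-- The Gabbay-Rodrigues iteration sequence from the initial assignment `V0`. -/
noncomputable def grSeq [Fintype S] (R : S → S → Prop) [DecidableRel R] (V0 : S → ℝ) : ℕ → S → ℝ
  | 0 => V0
  | i + 1 => grStep R (grSeq R V0 i)

def inSet (V : S → ℝ) : Set S := {X | V X = 1}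

def outSet (V : S → ℝ) : Set S := {X | V X = 0}

def conflictFree (R : S → S → Prop) (E : Set S) : Prop := ∀ X ∈ E, ∀ Y ∈ E, ¬ R X Y

def acceptable (R : S → S → Prop) (E : Set S) (X : S) : Prop := ∀ Y, R Y X → ∃ Z ∈ E, R Z Y

def admissible (R : S → S → Prop) (E : Set S) : Prop :=
  conflictFree R E ∧ ∀ X ∈ E, acceptable R E X

def completeExt (R : S → S → Prop) (E : Set S) : Prop :=
  admissible R E ∧ ∀ X, acceptable R E X → X ∈ E

/-- `E⁺` : the set of arguments attacked by `E`. -/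
def plusSet (R : S → S → Prop) (E : Set S) : Set S := {X | ∃ Y ∈ E, R Y X}

/-- The GR sequence is stable at iteration `k` if every node with a crisp value at
iteration `k` keeps that value at iteration `k+1`. -/
def grStable [Fintype S] (R : S → S → Prop) [DecidableRel R] (V0 : S → ℝ) (k : ℕ) : Prop :=
  ∀ X : S, (grSeq R V0 k X = 0 ∨ grSeq R V0 k X = 1) → grSeq R V0 (k + 1) X = grSeq R V0 k X

section Aux
variable {S : Type*}

lemma attMax_nonneg [Fintype S] (R : S → S → Prop) [DecidableRel R] (V : S → ℝ) (X : S) :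
    0 ≤ attMax R V X :=
  (Finset.le_fold_max 0).2 (Or.inl le_rfl)

lemma attMax_le_one [Fintype S] (R : S → S → Prop) [DecidableRel R] (V : S → ℝ)
    (hV : ∀ X, V X ∈ Set.Icc (0:ℝ) 1) (X : S) : attMax R V X ≤ 1 :=
  (Finset.fold_max_le 1).2 ⟨zero_le_one, fun Y _ => (hV Y).2⟩

lemma grSeq_mem_Icc [Fintype S] (R : S → S → Prop) [DecidableRel R] (V0 : S → ℝ)
    (hV0 : ∀ X, V0 X ∈ Set.Icc (0:ℝ) 1) : ∀ k X, grSeq R V0 k X ∈ Set.Icc (0:ℝ) 1 := by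
  intro k
  induction k with
  | zero => exact hV0
  | succ k ih =>
    intro X
    have hM0 : 0 ≤ attMax R (grSeq R V0 k) X := attMax_nonneg R _ X
    have hM1 : attMax R (grSeq R V0 k) X ≤ 1 := attMax_le_one R _ ih X
    have hv := ih X
    obtain ⟨hv0, hv1⟩ := hv
    show grStep R (grSeq R V0 k) X ∈ Set.Icc (0:ℝ) 1
    unfold grStep
    set M := attMax R (grSeq R V0 k) X
    set v := grSeq R V0 k X
    have ha0 : (0:ℝ) ≤ min (1/2) (1 - M) := le_min (by norm_num) (by linarith)
    have ha1 : min (1/2) (1 - M) ≤ 1/2 := min_le_left _ _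
    have hb0 : (1/2:ℝ) ≤ max (1/2) (1 - M) := le_max_left _ _
    have hb1 : max (1/2) (1 - M) ≤ 1 := max_le (by norm_num) (by linarith)
    constructor
    · nlinarith
    · nlinarith

/-- Non-crisp values stay non-crisp. -/
lemma grSeq_noncrisp [Fintype S] (R : S → S → Prop) [DecidableRel R] (V0 : S → ℝ)
    (hV0 : ∀ X, V0 X ∈ Set.Icc (0:ℝ) 1) (k : ℕ) (X : S)
    (h0 : 0 < grSeq R V0 k X) (h1 : grSeq R V0 k X < 1) :
    0 < grSeq R V0 (k+1) X ∧ grSeq R V0 (k+1) X < 1 := by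
  have hM0 : 0 ≤ attMax R (grSeq R V0 k) X := attMax_nonneg R _ X
  have hM1 : attMax R (grSeq R V0 k) X ≤ 1 :=
    attMax_le_one R _ (grSeq_mem_Icc R V0 hV0 k) X
  show 0 < grStep R (grSeq R V0 k) X ∧ grStep R (grSeq R V0 k) X < 1
  unfold grStep
  set M := attMax R (grSeq R V0 k) X
  set v := grSeq R V0 k X
  have ha0 : (0:ℝ) ≤ min (1/2) (1 - M) := le_min (by norm_num) (by linarith)
  have ha1 : min (1/2) (1 - M) ≤ 1/2 := min_le_left _ _
  have hb0 : (1/2:ℝ) ≤ max (1/2) (1 - M) := le_max_left _ _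
  have hb1 : max (1/2) (1 - M) ≤ 1 := max_le (by norm_num) (by linarith)
  constructor
  · nlinarith
  · nlinarith

/-- If a crisp value changes, the new value is strictly between 0 and 1. -/
lemma grSeq_change [Fintype S] (R : S → S → Prop) [DecidableRel R] (V0 : S → ℝ)
    (hV0 : ∀ X, V0 X ∈ Set.Icc (0:ℝ) 1) (k : ℕ) (X : S)
    (hc : grSeq R V0 k X = 0 ∨ grSeq R V0 k X = 1)
    (hne : grSeq R V0 (k+1) X ≠ grSeq R V0 k X) :
    0 < grSeq R V0 (k+1) X ∧ grSeq R V0 (k+1) X < 1 := by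
  have hM0 : 0 ≤ attMax R (grSeq R V0 k) X := attMax_nonneg R _ X
  have hM1 : attMax R (grSeq R V0 k) X ≤ 1 :=
    attMax_le_one R _ (grSeq_mem_Icc R V0 hV0 k) X
  have hstep : grSeq R V0 (k+1) X = grStep R (grSeq R V0 k) X := rfl
  rcases hc with h | h
  · have hval : grSeq R V0 (k+1) X = min (1/2) (1 - attMax R (grSeq R V0 k) X) := by
      rw [hstep]; unfold grStep; rw [h]; ring
    rw [h] at hne
    constructor
    · rcases lt_or_eq_of_le (le_min (by norm_num) (by linarith) :
        (0:ℝ) ≤ min (1/2) (1 - attMax R (grSeq R V0 k) X)) with hlt | heq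
      · rw [hval]; exact hlt
      · exact absurd (hval.trans heq.symm) hne
    · rw [hval]
      calc min (1/2) (1 - attMax R (grSeq R V0 k) X) ≤ 1/2 := min_le_left _ _
        _ < 1 := by norm_num
  · have hval : grSeq R V0 (k+1) X = max (1/2) (1 - attMax R (grSeq R V0 k) X) := by
      rw [hstep]; unfold grStep; rw [h]; ring
    rw [h] at hne
    constructor
    · rw [hval]
      calc (0:ℝ) < 1/2 := by norm_num
        _ ≤ _ := le_max_left _ _
    · rcases lt_or_eq_of_le (max_le (by norm_num) (by linarith) :
        max (1/2) (1 - attMax R (grSeq R V0 k) X) ≤ (1:ℝ)) with hlt | heq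
      · rw [hval]; exact hlt
      · exact absurd (hval.trans heq) hne

end Aux

theorem stmt10 [Fintype S] [Nonempty S] (R : S → S → Prop) [DecidableRel R]
    (n : ℕ) (hn : Fintype.card S = n)
    (V0 : S → ℝ) (hV0 : ∀ X, V0 X ∈ Set.Icc (0:ℝ) 1) :
    (∀ k : ℕ, ¬ grStable R V0 k →
      ∃ X : S, (grSeq R V0 k X = 0 ∨ grSeq R V0 k X = 1) ∧
        0 < grSeq R V0 (k + 1) X ∧ grSeq R V0 (k + 1) X < 1) ∧
    (∃ k : ℕ, k ≤ n ∧ grStable R V0 k) := by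
  classical
  have part1 : ∀ k : ℕ, ¬ grStable R V0 k →
      ∃ X : S, (grSeq R V0 k X = 0 ∨ grSeq R V0 k X = 1) ∧
        0 < grSeq R V0 (k + 1) X ∧ grSeq R V0 (k + 1) X < 1 := by
    intro k hk
    unfold grStable at hk
    push_neg at hk
    obtain ⟨X, hc, hne⟩ := hk
    exact ⟨X, hc, grSeq_change R V0 hV0 k X hc hne⟩
  refine ⟨part1, ?_⟩
  by_contra hcon
  push_neg at hcon
  set C : ℕ → Finset S := fun k =>
    Finset.univ.filter (fun X => grSeq R V0 k X = 0 ∨ grSeq R V0 k X = 1) with hC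
  have hsub : ∀ k, C (k+1) ⊆ C k := by
    intro k X hX
    simp only [hC, Finset.mem_filter, Finset.mem_univ, true_and] at hX ⊢
    by_contra hnc
    push_neg at hnc
    obtain ⟨h0, h1⟩ := hnc
    have hm := grSeq_mem_Icc R V0 hV0 k X
    have h0' : 0 < grSeq R V0 k X := lt_of_le_of_ne hm.1 (Ne.symm h0)
    have h1' : grSeq R V0 k X < 1 := lt_of_le_of_ne hm.2 h1
    obtain ⟨g0, g1⟩ := grSeq_noncrisp R V0 hV0 k X h0' h1'
    rcases hX with h | h
    · exact absurd h (ne_of_gt g0)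
    · exact absurd h (ne_of_lt g1)
  have hdec : ∀ k ≤ n, (C (k+1)).card < (C k).card := by
    intro k hkn
    obtain ⟨X, hc, g0, g1⟩ := part1 k (hcon k hkn)
    apply Finset.card_lt_card
    refine ⟨hsub k, fun hss => ?_⟩
    have hXk : X ∈ C k := by
      simp only [hC, Finset.mem_filter, Finset.mem_univ, true_and]; exact hc
    have hXk1 := hss hXk
    simp only [hC, Finset.mem_filter, Finset.mem_univ, true_and] at hXk1
    rcases hXk1 with h | h
    · exact absurd h (ne_of_gt g0)
    · exact absurd h (ne_of_lt g1)
  have hbound : ∀ j, j ≤ n + 1 → (C j).card + j ≤ n := by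
    intro j
    induction j with
    | zero =>
      intro _
      have : (C 0).card ≤ Fintype.card S := Finset.card_le_card (Finset.subset_univ _)
      omega
    | succ j ih =>
      intro hj
      have h1 := ih (by omega)
      have h2 := hdec j (by omega)
      omega
  have := hbound (n+1) le_rfl
  omega
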